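/- arXiv:math/0605714 — 5 statements merged into one kernel-verified Lean document; each statement's English description precedes it below -/
import Mathlib

section
/- Let A = (M̃_A, Ñ_A) be an interval valued intuitionistic (S,T)-fuzzy Hv-submodule of an Hv-module M over an Hv-ring R, where T and S are idempotent interval t- and s-norms. Then for all t,s ∈ [0,1] with t ≤ s, the upper level set U(M̃_A; [t,s]) = { x ∈ M : M̃_A(x) ≥ [t,s] }, if nonempty, is an Hv-submodule of M. -/
/-- The lattice `D[0,1]` of interval numbers `[a⁻,a⁺]`, `0 ≤ a⁻ ≤ a⁺ ≤ 1`. -/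
def D01 : Type := {p : ℝ × ℝ // 0 ≤ p.1 ∧ p.1 ≤ p.2 ∧ p.2 ≤ 1}

namespace D01

/-- Componentwise order on `D[0,1]`. -/
instance : PartialOrder D01 where
  le a b := a.1.1 ≤ b.1.1 ∧ a.1.2 ≤ b.1.2
  le_refl _ := ⟨le_refl _, le_refl _⟩
  le_trans _ _ _ h h' := ⟨h.1.trans h'.1, h.2.trans h'.2⟩
  le_antisymm _ _ h h' := Subtype.ext (Prod.ext (le_antisymm h.1 h'.1) (le_antisymm h.2 h'.2))

/-- The greatest interval number `[1,1]`. -/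
def one : D01 := ⟨(1, 1), by norm_num⟩

/-- The least interval number `[0,0]`. -/
def zero : D01 := ⟨(0, 0), by norm_num⟩

end D01

/-- `T` is an idempotent interval t-norm on `D[0,1]`. -/
structure IsIntervalTNorm (T : D01 → D01 → D01) : Prop where
  comm : ∀ a b, T a b = T b a
  assoc : ∀ a b c, T (T a b) c = T a (T b c)
  idem : ∀ a, T a a = a
  mono : ∀ a u w, u ≤ w → T a u ≤ T a w
  unit : ∀ a, T a D01.one = a

/-- `S` is an idempotent interval s-norm on `D[0,1]`. -/
structure IsIntervalSNorm (S : D01 → D01 → D01) : Prop where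
  comm : ∀ a b, S a b = S b a
  assoc : ∀ a b c, S (S a b) c = S a (S b c)
  idem : ∀ a, S a a = a
  mono : ∀ a u w, u ≤ w → S a u ≤ S a w
  unit : ∀ a, S a D01.zero = a

/-- The sum of two subsets relative to a hyperoperation. -/
def setAdd {M : Type*} (add : M → M → Set M) (A B : Set M) : Set M :=
  ⋃ a ∈ A, ⋃ b ∈ B, add a b

/-- Extension of an external hyperoperation to sets. -/
def hSmulSet {R M : Type*} (smul : R → M → Set M) (A : Set R) (B : Set M) : Set M :=
  ⋃ r ∈ A, ⋃ b ∈ B, smul r b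

/-- An `Hv`-module `M` over an `Hv`-ring `R`: a weak commutative `Hv`-group `(M,+)`
with an external hyperoperation satisfying the weak distributivity/associativity axioms. -/
structure HvModule (R M : Type*) where
  addR : R → R → Set R
  mulR : R → R → Set R
  add : M → M → Set M
  smul : R → M → Set M
  add_nonempty : ∀ x y : M, (add x y).Nonempty
  smul_nonempty : ∀ (r : R) (x : M), (smul r x).Nonempty
  add_weak_assoc : ∀ x y z : M,
    (setAdd add {x} (add y z) ∩ setAdd add (add x y) {z}).Nonempty
  repro : ∀ a : M, setAdd add {a} Set.univ = Set.univ ∧ setAdd add Set.univ {a} = Set.univ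
  weak_comm : ∀ x y : M, (add x y ∩ add y x).Nonempty
  weak_distrib₁ : ∀ (a : R) (x y : M),
    (hSmulSet smul {a} (add x y) ∩ setAdd add (smul a x) (smul a y)).Nonempty
  weak_distrib₂ : ∀ (a b : R) (x : M),
    (hSmulSet smul (addR a b) {x} ∩ setAdd add (smul a x) (smul b x)).Nonempty
  weak_assoc₂ : ∀ (a b : R) (x : M),
    (hSmulSet smul (mulR a b) {x} ∩ hSmulSet smul {a} (smul b x)).Nonempty

/-- `N` is an `Hv`-submodule of the `Hv`-module `M`. -/
def IsHvSubmodule {R M : Type*} (H : HvModule R M) (N : Set M) : Prop :=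
  N.Nonempty ∧ (∀ x ∈ N, ∀ y ∈ N, H.add x y ⊆ N) ∧
  (∀ a ∈ N, setAdd H.add {a} N = N ∧ setAdd H.add N {a} = N) ∧
  (∀ (r : R), ∀ x ∈ N, H.smul r x ⊆ N)

/-- `(M̃_A, Ñ_A)` is an interval valued intuitionistic fuzzy set:
`sup M̃_A(x) + sup Ñ_A(x) ≤ 1`. -/
def IsIVIFSet {M : Type*} (MA NA : M → D01) : Prop :=
  ∀ x : M, (MA x).1.2 + (NA x).1.2 ≤ 1

/-- Definition 3.1: `(M̃_A, Ñ_A)` is an interval valued intuitionistic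
`(S,T)`-fuzzy `Hv`-submodule of `M`. -/
def IsIVIFHvSubmodule {R M : Type*} (H : HvModule R M)
    (T S : D01 → D01 → D01) (MA NA : M → D01) : Prop :=
  (∀ x y : M, ∀ α ∈ H.add x y, T (MA x) (MA y) ≤ MA α ∧ NA α ≤ S (NA x) (NA y)) ∧
  (∀ x a : M, ∃ y : M, x ∈ H.add a y ∧ T (MA x) (MA a) ≤ MA y ∧ NA y ≤ S (NA x) (NA a)) ∧
  (∀ x a : M, ∃ z : M, x ∈ H.add z a ∧ T (MA x) (MA a) ≤ MA z ∧ NA z ≤ S (NA x) (NA a)) ∧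
  (∀ (r : R) (x : M), ∀ α ∈ H.smul r x, MA x ≤ MA α ∧ NA α ≤ NA x)

/-- Upper level set `U(M̃_A;[t,s])`. -/
def levelU {M : Type*} (MA : M → D01) (d : D01) : Set M := {x | d ≤ MA x}

/-- Lower level set `L(Ñ_A;[t,s])`. -/
def levelL {M : Type*} (NA : M → D01) (d : D01) : Set M := {x | NA x ≤ d}

lemma td {T : D01 → D01 → D01} (hT : IsIntervalTNorm T) {d a b : D01}
    (ha : d ≤ a) (hb : d ≤ b) : d ≤ T a b := by
  calc d = T d d := (hT.idem d).symm
  _ ≤ T d b := hT.mono d d b hb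
  _ = T b d := hT.comm d b
  _ ≤ T b a := hT.mono b d a ha
  _ = T a b := hT.comm b a

/-- Theorem 3.2 (⇒, membership part): every nonempty upper level set
`U(M̃_A;[t,s])` of an interval valued intuitionistic `(S,T)`-fuzzy
`Hv`-submodule is an `Hv`-submodule of `M`. -/
theorem levelU_isHvSubmodule {R M : Type*} (H : HvModule R M)
    (T S : D01 → D01 → D01) (hT : IsIntervalTNorm T) (hS : IsIntervalSNorm S)
    (MA NA : M → D01) (hIF : IsIVIFSet MA NA)
    (hA : IsIVIFHvSubmodule H T S MA NA) :
    ∀ d : D01, (levelU MA d).Nonempty → IsHvSubmodule H (levelU MA d) := by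
  intro d hne
  obtain ⟨h1, h2, h3, h4⟩ := hA
  refine ⟨hne, ?_, ?_, ?_⟩
  · intro x hx y hy α hα
    exact le_trans (td hT hx hy) (h1 x y α hα).1
  · intro a ha
    constructor
    · apply Set.Subset.antisymm
      · intro x hx
        simp only [setAdd, Set.mem_iUnion] at hx
        obtain ⟨a', ha', y, hy, hxy⟩ := hx
        simp only [Set.mem_singleton_iff] at ha'
        subst ha'
        exact le_trans (td hT ha hy) (h1 a' y x hxy).1
      · intro x hx
        obtain ⟨y, hxy, hTy, _⟩ := h2 x a
        simp only [setAdd, Set.mem_iUnion]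
        exact ⟨a, rfl, y, le_trans (td hT hx ha) hTy, hxy⟩
    · apply Set.Subset.antisymm
      · intro x hx
        simp only [setAdd, Set.mem_iUnion] at hx
        obtain ⟨y, hy, a', ha', hxy⟩ := hx
        simp only [Set.mem_singleton_iff] at ha'
        subst ha'
        exact le_trans (td hT hy ha) (h1 y a' x hxy).1
      · intro x hx
        obtain ⟨z, hxz, hTz, _⟩ := h3 x a
        simp only [setAdd, Set.mem_iUnion]
        exact ⟨z, le_trans (td hT hx ha) hTz, a, rfl, hxz⟩
  · intro r x hx α hα
    exact le_trans hx (h4 r x α hα).1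
end

section
/- Let A = (M̃_A, Ñ_A) be an interval valued intuitionistic (S,T)-fuzzy Hv-submodule of an Hv-module M. Then for all t,s ∈ [0,1] with t ≤ s, the lower level set L(Ñ_A; [t,s]) = { x ∈ M : Ñ_A(x) ≤ [t,s] }, if nonempty, is an Hv-submodule of M. -/
/-- Theorem 3.2 (⇒, non-membership part): every nonempty lower level set
`L(Ñ_A;[t,s])` of an interval valued intuitionistic `(S,T)`-fuzzy
`Hv`-submodule is an `Hv`-submodule of `M`. -/
theorem levelL_isHvSubmodule {R M : Type*} (H : HvModule R M)
    (T S : D01 → D01 → D01) (hT : IsIntervalTNorm T) (hS : IsIntervalSNorm S)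
    (MA NA : M → D01) (hIF : IsIVIFSet MA NA)
    (hA : IsIVIFHvSubmodule H T S MA NA) :
    ∀ d : D01, (levelL NA d).Nonempty → IsHvSubmodule H (levelL NA d) := by
  intro d hne
  have key : ∀ a b : D01, a ≤ d → b ≤ d → S a b ≤ d := by
    intro a b ha hb
    calc S a b ≤ S a d := hS.mono a b d hb
    _ = S d a := by rw [hS.comm]
    _ ≤ S d d := hS.mono d a d ha
    _ = d := hS.idem d
  refine ⟨hne, ?_, ?_, ?_⟩
  · intro x hx y hy α hα
    exact le_trans (hA.1 x y α hα).2 (key _ _ hx hy)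
  · intro a ha
    constructor
    · ext x
      simp only [setAdd, Set.mem_iUnion, Set.mem_singleton_iff]
      constructor
      · rintro ⟨a', rfl, y, hy, hxy⟩
        exact le_trans (hA.1 a' y x hxy).2 (key _ _ ha hy)
      · intro hx
        obtain ⟨y, hxy, _, hy⟩ := hA.2.1 x a
        exact ⟨a, rfl, y, le_trans hy (key _ _ hx ha), hxy⟩
    · ext x
      simp only [setAdd, Set.mem_iUnion, Set.mem_singleton_iff]
      constructor
      · rintro ⟨y, hy, a', rfl, hxy⟩
        exact le_trans (hA.1 y a' x hxy).2 (key _ _ hy ha)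
      · intro hx
        obtain ⟨z, hxz, _, hz⟩ := hA.2.2.1 x a
        exact ⟨z, le_trans hz (key _ _ hx ha), a, rfl, hxz⟩
  · intro r x hx α hα
    exact le_trans (hA.2.2.2 r x α hα).2 hx
end

section
/- Let M be an Hv-module over an Hv-ring R with fundamental relation ε* and fundamental module M/ε* over the fundamental ring R/γ*. If A = (M̃_A, Ñ_A) is an interval valued intuitionistic (S,T)-fuzzy Hv-submodule of M, then the induced pair A/ε* on M/ε*, defined by M̃_{ε*}(ε*(x)) = sup_{a ∈ ε*(x)} M̃_A(a) for ε*(x) ≠ ω_M and M̃_{ε*}(ω_M) = [1,1] (dually Ñ_{ε*} with inf and [0,0]), satisfies T(M̃_{ε*}(ε*(x)), M̃_{ε*}(ε*(y))) ≤ M̃_{ε*}(ε*(x) ⊕ ε*(y)) for all x, y ∈ M. -/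
section Aux

lemma D01.le_def' (a b : D01) : a ≤ b ↔ a.1.1 ≤ b.1.1 ∧ a.1.2 ≤ b.1.2 := Iff.rfl

lemma D01.le_one' (a : D01) : a ≤ D01.one := ⟨a.2.2.1.trans a.2.2.2, a.2.2.2⟩

lemma T_le_left {T : D01 → D01 → D01} (hT : IsIntervalTNorm T) (a b : D01) :
    T a b ≤ a := by
  have h := hT.mono a b D01.one (D01.le_one' b)
  rwa [hT.unit] at h

lemma T_le_right {T : D01 → D01 → D01} (hT : IsIntervalTNorm T) (a b : D01) :
    T a b ≤ b := by rw [hT.comm]; exact T_le_left hT b a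

lemma le_T_of_le {T : D01 → D01 → D01} (hT : IsIntervalTNorm T) {a b c : D01}
    (hca : c ≤ a) (hcb : c ≤ b) : c ≤ T a b :=
  calc c = T c c := (hT.idem c).symm
    _ ≤ T c b := hT.mono c c b hcb
    _ = T b c := hT.comm c b
    _ ≤ T b a := hT.mono b c a hca
    _ = T a b := hT.comm b a

/-- Componentwise infimum in `D[0,1]`. -/
def D01.inf (a b : D01) : D01 :=
  ⟨(min a.1.1 b.1.1, min a.1.2 b.1.2),
    le_min a.2.1 b.2.1, min_le_min a.2.2.1 b.2.2.1, min_le_of_left_le a.2.2.2⟩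

lemma D01.inf_le_left' (a b : D01) : D01.inf a b ≤ a := ⟨min_le_left _ _, min_le_left _ _⟩
lemma D01.inf_le_right' (a b : D01) : D01.inf a b ≤ b := ⟨min_le_right _ _, min_le_right _ _⟩

/-- An `IsLUB` in `D[0,1]` gives componentwise `IsLUB`s in `ℝ`. -/
lemma comp_lub (s : Set D01) (hs : s.Nonempty) (u : D01) (h : IsLUB s u) :
    IsLUB ((fun d : D01 => d.1.1) '' s) u.1.1 ∧
      IsLUB ((fun d : D01 => d.1.2) '' s) u.1.2 := by
  obtain ⟨d0, hd0⟩ := hs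
  have hub1 : ∀ d ∈ s, d.1.1 ≤ u.1.1 := fun d hd => (h.1 hd).1
  have hub2 : ∀ d ∈ s, d.1.2 ≤ u.1.2 := fun d hd => (h.1 hd).2
  have h1 : IsLUB ((fun d : D01 => d.1.1) '' s) u.1.1 := by
    constructor
    · rintro r ⟨d, hd, rfl⟩; exact hub1 d hd
    · intro r hr
      have hr0 : 0 ≤ r := d0.2.1.trans (hr ⟨d0, hd0, rfl⟩)
      have : u ≤ ⟨(min r u.1.2, u.1.2),
          le_min hr0 (u.2.1.trans u.2.2.1), min_le_right _ _, u.2.2.2⟩ := by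
        apply h.2
        intro d hd
        exact ⟨le_min (hr ⟨d, hd, rfl⟩) ((hub1 d hd).trans u.2.2.1), hub2 d hd⟩
      exact this.1.trans (min_le_left _ _)
  refine ⟨h1, ?_, ?_⟩
  · rintro r ⟨d, hd, rfl⟩; exact hub2 d hd
  · intro r hr
    have hr1 : ∀ d ∈ s, d.1.1 ≤ r := fun d hd => d.2.2.1.trans (hr ⟨d, hd, rfl⟩)
    have hu1r : u.1.1 ≤ r := h1.2 (by rintro t ⟨d, hd, rfl⟩; exact hr1 d hd)
    have : u ≤ ⟨(u.1.1, min r 1), u.2.1, le_min hu1r (u.2.2.1.trans u.2.2.2),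
        min_le_right _ _⟩ := by
      apply h.2
      intro d hd
      exact ⟨hub1 d hd, le_min (hr ⟨d, hd, rfl⟩) (d.2.2.2)⟩
    exact this.2.trans (min_le_left _ _)

lemma min_lub_le {A B C : Set ℝ} {a b c : ℝ} (hA : IsLUB A a) (hB : IsLUB B b)
    (hC : IsLUB C c) (h : ∀ x ∈ A, ∀ y ∈ B, ∃ z ∈ C, min x y ≤ z) :
    min a b ≤ c := by
  by_contra hlt
  push_neg at hlt
  obtain ⟨x, hx, hcx⟩ := (lt_isLUB_iff hA).1 (hlt.trans_le (min_le_left _ _))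
  obtain ⟨y, hy, hcy⟩ := (lt_isLUB_iff hB).1 (hlt.trans_le (min_le_right _ _))
  obtain ⟨z, hz, hmz⟩ := h x hx y hy
  exact absurd ((lt_min hcx hcy).trans_le (hmz.trans (hC.1 hz))) (lt_irrefl c)

end Aux

/-- Theorem 3.9 (additive part): let `φ : M → M/ε*` be the canonical projection onto the
fundamental module (an abelian group `Q`), with `φ(c) = φ(x) ⊕ φ(y)` for every
`c ∈ x + y`, and let `M̃_{ε*}` be defined on nonzero classes as the supremum (least upper
bound) of `M̃_A` over the class and by `[1,1]` on `ω_M`.  If `A` is an interval valued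
intuitionistic `(S,T)`-fuzzy `Hv`-submodule of `M`, then
`T(M̃_{ε*}(ε*(x)), M̃_{ε*}(ε*(y))) ≤ M̃_{ε*}(ε*(x) ⊕ ε*(y))` for all `x, y ∈ M`. -/
theorem quotient_membership_ineq {R M Q : Type*} [AddCommGroup Q]
    (H : HvModule R M) (φ : M → Q) (hφsurj : Function.Surjective φ)
    (hφadd : ∀ x y : M, ∀ c ∈ H.add x y, φ c = φ x + φ y)
    (T S : D01 → D01 → D01) (hT : IsIntervalTNorm T) (hS : IsIntervalSNorm S)
    (MA NA : M → D01) (hIF : IsIVIFSet MA NA)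
    (hA : IsIVIFHvSubmodule H T S MA NA)
    (Mε : Q → D01) (hMε0 : Mε 0 = D01.one)
    (hMε : ∀ q : Q, q ≠ 0 → IsLUB {d : D01 | ∃ a : M, φ a = q ∧ MA a = d} (Mε q)) :
    ∀ x y : M, T (Mε (φ x)) (Mε (φ y)) ≤ Mε (φ x + φ y) := by
  intro x y
  by_cases hxy : φ x + φ y = 0
  · rw [hxy, hMε0]; exact D01.le_one' _
  by_cases hx : φ x = 0
  · rw [hx, zero_add, hMε0, hT.comm, hT.unit]
  by_cases hy : φ y = 0
  · rw [hy, add_zero, hMε0, hT.unit]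
  -- main case
  have hlubx := hMε (φ x) hx
  have hluby := hMε (φ y) hy
  have hlubxy := hMε (φ x + φ y) hxy
  have hne : ∀ w : M, ({d : D01 | ∃ a : M, φ a = φ w ∧ MA a = d}).Nonempty :=
    fun w => ⟨MA w, w, rfl, rfl⟩
  obtain ⟨hX1, hX2⟩ := comp_lub _ (hne x) _ hlubx
  obtain ⟨hY1, hY2⟩ := comp_lub _ (hne y) _ hluby
  obtain ⟨c0, hc0⟩ := H.add_nonempty x y
  obtain ⟨hZ1, hZ2⟩ := comp_lub {d : D01 | ∃ a : M, φ a = φ x + φ y ∧ MA a = d} ⟨MA c0, c0, hφadd x y c0 hc0, rfl⟩ _ hlubxy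
  have key : ∀ i : Bool,
      ∀ r ∈ (fun d : D01 => if i then d.1.1 else d.1.2) ''
        {d : D01 | ∃ a : M, φ a = φ x ∧ MA a = d},
      ∀ s ∈ (fun d : D01 => if i then d.1.1 else d.1.2) ''
        {d : D01 | ∃ a : M, φ a = φ y ∧ MA a = d},
      ∃ t ∈ (fun d : D01 => if i then d.1.1 else d.1.2) ''
        {d : D01 | ∃ a : M, φ a = φ x + φ y ∧ MA a = d}, min r s ≤ t := by
    rintro i r ⟨d, ⟨a, ha, rfl⟩, rfl⟩ s ⟨e, ⟨b, hb, rfl⟩, rfl⟩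
    obtain ⟨c, hc⟩ := H.add_nonempty a b
    have hTc : T (MA a) (MA b) ≤ MA c := (hA.1 a b c hc).1
    have hinf : D01.inf (MA a) (MA b) ≤ MA c :=
      (le_T_of_le hT (D01.inf_le_left' _ _) (D01.inf_le_right' _ _)).trans hTc
    refine ⟨(fun d : D01 => if i then d.1.1 else d.1.2) (MA c),
      ⟨MA c, ⟨c, by rw [hφadd a b c hc, ha, hb], rfl⟩, rfl⟩, ?_⟩
    cases i
    · exact hinf.2
    · exact hinf.1
  have h1 : min (Mε (φ x)).1.1 (Mε (φ y)).1.1 ≤ (Mε (φ x + φ y)).1.1 :=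
    min_lub_le hX1 hY1 hZ1 (by simpa using key true)
  have h2 : min (Mε (φ x)).1.2 (Mε (φ y)).1.2 ≤ (Mε (φ x + φ y)).1.2 :=
    min_lub_le hX2 hY2 hZ2 (by simpa using key false)
  have hl := T_le_left hT (Mε (φ x)) (Mε (φ y))
  have hr := T_le_right hT (Mε (φ x)) (Mε (φ y))
  exact ⟨(le_min hl.1 hr.1).trans h1, (le_min hl.2 hr.2).trans h2⟩
end

section
/- If A = (M̃_A, Ñ_A) is an interval valued intuitionistic (S,T)-fuzzy Hv-submodule of an Hv-module M over an Hv-ring R, then the quotient A/ε* = (M̃_{ε*}, Ñ_{ε*}) is an interval valued intuitionistic (S,T)-fuzzy submodule of the fundamental module M/ε* over R/γ*: (i) M̃_{ε*}(ω_M) = [1,1] and Ñ_{ε*}(ω_M) = [0,0]; (ii) T(M̃_{ε*}(u), M̃_{ε*}(v)) ≤ M̃_{ε*}(u − v) and S(Ñ_{ε*}(u), Ñ_{ε*}(v)) ≥ Ñ_{ε*}(u − v) for all u, v ∈ M/ε*; (iii) M̃_{ε*}(u) ≤ M̃_{ε*}(γ*(r) ⊙ u) and Ñ_{ε*}(u)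 ≥ Ñ_{ε*}(γ*(r) ⊙ u) for all u ∈ M/ε*, r ∈ R. -/
namespace D01

lemma le_def'_s16 {a b : D01} : a ≤ b ↔ a.1.1 ≤ b.1.1 ∧ a.1.2 ≤ b.1.2 := Iff.rfl

lemma le_one'_s16 (a : D01) : a ≤ D01.one := ⟨a.2.2.1.trans a.2.2.2, a.2.2.2⟩
lemma zero_le' (a : D01) : D01.zero ≤ a := ⟨a.2.1, a.2.1.trans a.2.2.1⟩

/-- Componentwise minimum in `D01`. -/
def meet (a b : D01) : D01 :=
  ⟨(min a.1.1 b.1.1, min a.1.2 b.1.2),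
   le_min a.2.1 b.2.1, min_le_min a.2.2.1 b.2.2.1, (min_le_left _ _).trans a.2.2.2⟩

/-- Componentwise maximum in `D01`. -/
def join (a b : D01) : D01 :=
  ⟨(max a.1.1 b.1.1, max a.1.2 b.1.2),
   le_max_of_le_left a.2.1, max_le_max a.2.2.1 b.2.2.1, max_le a.2.2.2 b.2.2.2⟩

lemma meet_le_left (a b : D01) : meet a b ≤ a := ⟨min_le_left _ _, min_le_left _ _⟩
lemma meet_le_right (a b : D01) : meet a b ≤ b := ⟨min_le_right _ _, min_le_right _ _⟩
lemma le_meet {a b c : D01} (h1 : c ≤ a) (h2 : c ≤ b) : c ≤ meet a b :=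
  ⟨le_min h1.1 h2.1, le_min h1.2 h2.2⟩
lemma left_le_join (a b : D01) : a ≤ join a b := ⟨le_max_left _ _, le_max_left _ _⟩
lemma right_le_join (a b : D01) : b ≤ join a b := ⟨le_max_right _ _, le_max_right _ _⟩
lemma join_le {a b c : D01} (h1 : a ≤ c) (h2 : b ≤ c) : join a b ≤ c :=
  ⟨max_le h1.1 h2.1, max_le h1.2 h2.2⟩

end D01

/-- Any idempotent interval t-norm is the componentwise minimum. -/
lemma tnorm_eq_meet {T : D01 → D01 → D01} (hT : IsIntervalTNorm T) (a b : D01) :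
    T a b = D01.meet a b := by
  have h1 : T a b ≤ a := by
    have := hT.mono a b D01.one (D01.le_one'_s16 b); rwa [hT.unit] at this
  have h2 : T a b ≤ b := by
    rw [hT.comm]
    have := hT.mono b a D01.one (D01.le_one'_s16 a); rwa [hT.unit] at this
  have h3 : D01.meet a b ≤ T a b := by
    calc D01.meet a b = T (D01.meet a b) (D01.meet a b) := (hT.idem _).symm
    _ ≤ T (D01.meet a b) b := hT.mono _ _ _ (D01.meet_le_right a b)
    _ = T b (D01.meet a b) := hT.comm _ _
    _ ≤ T b a := hT.mono _ _ _ (D01.meet_le_left a b)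
    _ = T a b := hT.comm _ _
  exact le_antisymm (D01.le_meet h1 h2) h3

/-- Any idempotent interval s-norm is the componentwise maximum. -/
lemma snorm_eq_join {S : D01 → D01 → D01} (hS : IsIntervalSNorm S) (a b : D01) :
    S a b = D01.join a b := by
  have h1 : a ≤ S a b := by
    have := hS.mono a D01.zero b (D01.zero_le' b); rwa [hS.unit] at this
  have h2 : b ≤ S a b := by
    rw [hS.comm]
    have := hS.mono b D01.zero a (D01.zero_le' a); rwa [hS.unit] at this
  have h3 : S a b ≤ D01.join a b := by
    calc S a b = S b a := hS.comm _ _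
    _ ≤ S b (D01.join a b) := hS.mono _ _ _ (D01.left_le_join a b)
    _ = S (D01.join a b) b := hS.comm _ _
    _ ≤ S (D01.join a b) (D01.join a b) := hS.mono _ _ _ (D01.right_le_join a b)
    _ = D01.join a b := hS.idem _
  exact le_antisymm h3 (D01.join_le h1 h2)

lemma isLUB_fst {A : Set D01} {p : D01} (h : IsLUB A p) (hne : A.Nonempty) :
    IsLUB ((fun x : D01 => x.1.1) '' A) p.1.1 := by
  obtain ⟨x₀, hx₀⟩ := hne
  constructor
  · rintro _ ⟨x, hx, rfl⟩; exact (h.1 hx).1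
  · intro t ht
    have h0t : (0 : ℝ) ≤ t := x₀.2.1.trans (ht ⟨x₀, hx₀, rfl⟩)
    have hw : IsLUB A p → p ≤ ⟨(min t p.1.1, p.1.2),
        le_min h0t p.2.1, (min_le_right _ _).trans p.2.2.1, p.2.2.2⟩ := fun h => h.2 (by
      rintro x hx
      exact ⟨le_min (ht ⟨x, hx, rfl⟩) (h.1 hx).1, (h.1 hx).2⟩)
    exact ((hw h).1.trans (min_le_left _ _))

lemma isLUB_snd {A : Set D01} {p : D01} (h : IsLUB A p) (hne : A.Nonempty) :
    IsLUB ((fun x : D01 => x.1.2) '' A) p.1.2 := by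
  obtain ⟨x₀, hx₀⟩ := hne
  constructor
  · rintro _ ⟨x, hx, rfl⟩; exact (h.1 hx).2
  · intro t ht
    have h0t : (0 : ℝ) ≤ t := (x₀.2.1.trans x₀.2.2.1).trans (ht ⟨x₀, hx₀, rfl⟩)
    have hw : p ≤ ⟨(min p.1.1 t, min p.1.2 t),
        le_min p.2.1 h0t, min_le_min p.2.2.1 le_rfl, (min_le_left _ _).trans p.2.2.2⟩ := h.2 (by
      rintro x hx
      exact ⟨le_min (h.1 hx).1 (x.2.2.1.trans (ht ⟨x, hx, rfl⟩)), le_min (h.1 hx).2 (ht ⟨x, hx, rfl⟩)⟩)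
    exact hw.2.trans (min_le_right _ _)

lemma isGLB_fst {A : Set D01} {p : D01} (h : IsGLB A p) (hne : A.Nonempty) :
    IsGLB ((fun x : D01 => x.1.1) '' A) p.1.1 := by
  obtain ⟨x₀, hx₀⟩ := hne
  constructor
  · rintro _ ⟨x, hx, rfl⟩; exact (h.1 hx).1
  · intro t ht
    have ht1 : t ≤ 1 := (ht ⟨x₀, hx₀, rfl⟩).trans (x₀.2.2.1.trans x₀.2.2.2)
    have hw : (⟨(max t p.1.1, max (max t p.1.1) p.1.2),
        le_max_of_le_right p.2.1, le_max_left _ _,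
        max_le (max_le ht1 (p.2.2.1.trans p.2.2.2)) p.2.2.2⟩ : D01) ≤ p := h.2 (by
      rintro x hx
      refine ⟨max_le (ht ⟨x, hx, rfl⟩) (h.1 hx).1, max_le ?_ (h.1 hx).2⟩
      exact max_le ((ht ⟨x, hx, rfl⟩).trans x.2.2.1) ((h.1 hx).1.trans x.2.2.1))
    exact (le_max_left t p.1.1).trans hw.1

lemma isGLB_snd {A : Set D01} {p : D01} (h : IsGLB A p) (hne : A.Nonempty) :
    IsGLB ((fun x : D01 => x.1.2) '' A) p.1.2 := by
  obtain ⟨x₀, hx₀⟩ := hne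
  constructor
  · rintro _ ⟨x, hx, rfl⟩; exact (h.1 hx).2
  · intro t ht
    have ht1 : t ≤ 1 := (ht ⟨x₀, hx₀, rfl⟩).trans x₀.2.2.2
    have hw : (⟨(p.1.1, max t p.1.2), p.2.1, le_max_of_le_right p.2.2.1,
        max_le ht1 p.2.2.2⟩ : D01) ≤ p := h.2 (by
      rintro x hx
      exact ⟨(h.1 hx).1, max_le (ht ⟨x, hx, rfl⟩) (h.1 hx).2⟩)
    exact (le_max_left t p.1.2).trans hw.2

lemma real_min_lub {A B : Set ℝ} {p q h : ℝ} (hA : IsLUB A p) (hB : IsLUB B q)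
    (H : ∀ a ∈ A, ∀ b ∈ B, min a b ≤ h) : min p q ≤ h := by
  by_cases hc : ∃ a ∈ A, h < a
  · obtain ⟨a, ha, hah⟩ := hc
    have hq : q ≤ h := hB.2 (fun b hb => by
      by_contra hbh
      push_neg at hbh
      exact absurd (H a ha b hb) (not_le.mpr (lt_min hah hbh)))
    exact (min_le_right p q).trans hq
  · push_neg at hc
    exact (min_le_left p q).trans (hA.2 hc)

lemma real_max_glb {A B : Set ℝ} {p q h : ℝ} (hA : IsGLB A p) (hB : IsGLB B q)
    (H : ∀ a ∈ A, ∀ b ∈ B, h ≤ max a b) : h ≤ max p q := by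
  by_cases hc : ∃ a ∈ A, a < h
  · obtain ⟨a, ha, hah⟩ := hc
    have hq : h ≤ q := hB.2 (fun b hb => by
      by_contra hbh
      push_neg at hbh
      exact absurd (H a ha b hb) (not_le.mpr (max_lt hah hbh)))
    exact hq.trans (le_max_right p q)
  · push_neg at hc
    exact (hA.2 hc).trans (le_max_left p q)

lemma meet_lub_le {A B : Set D01} {p q c : D01} (hA : IsLUB A p) (hB : IsLUB B q)
    (hAne : A.Nonempty) (hBne : B.Nonempty)
    (H : ∀ a ∈ A, ∀ b ∈ B, D01.meet a b ≤ c) : D01.meet p q ≤ c := by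
  constructor
  · exact real_min_lub (isLUB_fst hA hAne) (isLUB_fst hB hBne) (by
      rintro _ ⟨a, ha, rfl⟩ _ ⟨b, hb, rfl⟩; exact (H a ha b hb).1)
  · exact real_min_lub (isLUB_snd hA hAne) (isLUB_snd hB hBne) (by
      rintro _ ⟨a, ha, rfl⟩ _ ⟨b, hb, rfl⟩; exact (H a ha b hb).2)

lemma le_join_glb {A B : Set D01} {p q c : D01} (hA : IsGLB A p) (hB : IsGLB B q)
    (hAne : A.Nonempty) (hBne : B.Nonempty)
    (H : ∀ a ∈ A, ∀ b ∈ B, c ≤ D01.join a b) : c ≤ D01.join p q := by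
  constructor
  · exact real_max_glb (isGLB_fst hA hAne) (isGLB_fst hB hBne) (by
      rintro _ ⟨a, ha, rfl⟩ _ ⟨b, hb, rfl⟩; exact (H a ha b hb).1)
  · exact real_max_glb (isGLB_snd hA hAne) (isGLB_snd hB hBne) (by
      rintro _ ⟨a, ha, rfl⟩ _ ⟨b, hb, rfl⟩; exact (H a ha b hb).2)


/-- Theorem 3.9: if `A = (M̃_A, Ñ_A)` is an interval valued intuitionistic `(S,T)`-fuzzy
`Hv`-submodule of an `Hv`-module `M` over an `Hv`-ring `R`, then the quotient
`A/ε* = (M̃_{ε*}, Ñ_{ε*})` is an interval valued intuitionistic `(S,T)`-fuzzy submodule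
of the fundamental module `M/ε*` (here a module `Q` over the fundamental ring `R'`,
with canonical projections `φ : M → Q`, `ψ : R → R'`):
(i) `M̃_{ε*}(ω_M) = [1,1]` and `Ñ_{ε*}(ω_M) = [0,0]`;
(ii) `T(M̃_{ε*}(u), M̃_{ε*}(v)) ≤ M̃_{ε*}(u − v)` and
`S(Ñ_{ε*}(u), Ñ_{ε*}(v)) ≥ Ñ_{ε*}(u − v)`;
(iii) `M̃_{ε*}(u) ≤ M̃_{ε*}(γ*(r) ⊙ u)` and `Ñ_{ε*}(u) ≥ Ñ_{ε*}(γ*(r) ⊙ u)`. -/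
theorem quotient_isIVIFSubmodule {R M : Type*} {R' Q : Type*}
    [Ring R'] [AddCommGroup Q] [Module R' Q]
    (H : HvModule R M) (φ : M → Q) (ψ : R → R')
    (hφsurj : Function.Surjective φ)
    (hφadd : ∀ x y : M, ∀ c ∈ H.add x y, φ c = φ x + φ y)
    (hφsmul : ∀ (r : R) (x : M), ∀ d ∈ H.smul r x, φ d = ψ r • φ x)
    (T S : D01 → D01 → D01) (hT : IsIntervalTNorm T) (hS : IsIntervalSNorm S)
    (MA NA : M → D01) (hIF : IsIVIFSet MA NA)
    (hA : IsIVIFHvSubmodule H T S MA NA)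
    (Mε Nε : Q → D01) (hMε0 : Mε 0 = D01.one) (hNε0 : Nε 0 = D01.zero)
    (hMε : ∀ q : Q, q ≠ 0 → IsLUB {d : D01 | ∃ a : M, φ a = q ∧ MA a = d} (Mε q))
    (hNε : ∀ q : Q, q ≠ 0 → IsGLB {d : D01 | ∃ a : M, φ a = q ∧ NA a = d} (Nε q)) :
    (Mε 0 = D01.one ∧ Nε 0 = D01.zero) ∧
    (∀ u v : Q, T (Mε u) (Mε v) ≤ Mε (u - v) ∧ Nε (u - v) ≤ S (Nε u) (Nε v)) ∧
    (∀ (u : Q) (r : R), Mε u ≤ Mε (ψ r • u) ∧ Nε (ψ r • u) ≤ Nε u) := by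
  have Tmeet := tnorm_eq_meet hT
  have Sjoin := snorm_eq_join hS
  have setE : ∀ q : Q, {d : D01 | ∃ a : M, φ a = q ∧ MA a = d}.Nonempty := fun q => by
    obtain ⟨a, ha⟩ := hφsurj q; exact ⟨MA a, a, ha, rfl⟩
  have setEN : ∀ q : Q, {d : D01 | ∃ a : M, φ a = q ∧ NA a = d}.Nonempty := fun q => by
    obtain ⟨a, ha⟩ := hφsurj q; exact ⟨NA a, a, ha, rfl⟩
  have ubM : ∀ (q : Q), q ≠ 0 → ∀ a : M, φ a = q → MA a ≤ Mε q :=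
    fun q hq a ha => (hMε q hq).1 ⟨a, ha, rfl⟩
  have lbN : ∀ (q : Q), q ≠ 0 → ∀ a : M, φ a = q → Nε q ≤ NA a :=
    fun q hq a ha => (hNε q hq).1 ⟨a, ha, rfl⟩
  refine ⟨⟨hMε0, hNε0⟩, ?_, ?_⟩
  · intro u v
    by_cases huv : u = v
    · subst huv
      rw [sub_self, hMε0, hNε0]
      exact ⟨D01.le_one'_s16 _, D01.zero_le' _⟩
    · have hsub : u - v ≠ 0 := sub_ne_zero.mpr huv
      by_cases hv : v = 0
      · subst hv
        rw [sub_zero, hMε0, hNε0, hT.unit, hS.unit]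
        exact ⟨le_rfl, le_rfl⟩
      · by_cases hu : u = 0
        · subst hu
          have key0 : ∀ b : M, φ b = v →
              MA b ≤ Mε (0 - v) ∧ Nε (0 - v) ≤ NA b := by
            intro b hb
            obtain ⟨y₀, hy₀, hTy₀, hSy₀⟩ := hA.2.1 b b
            have hφy₀ : φ y₀ = 0 := left_eq_add.mp (hφadd b y₀ b hy₀)
            obtain ⟨z, hz, hTz, hSz⟩ := hA.2.1 y₀ b
            have hφz : φ z = 0 - v := by
              have h1 := hφadd b z y₀ hz
              rw [hφy₀, hb] at h1
              rw [zero_sub]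
              exact eq_neg_of_add_eq_zero_right h1.symm
            have h1 : MA b ≤ MA y₀ := by rw [← hT.idem (MA b)]; exact hTy₀
            have h1' : NA y₀ ≤ NA b := by rw [← hS.idem (NA b)]; exact hSy₀
            constructor
            · have h2 : D01.meet (MA y₀) (MA b) ≤ MA z := by rw [← Tmeet]; exact hTz
              exact ((D01.le_meet h1 le_rfl).trans h2).trans (ubM _ hsub z hφz)
            · have h2 : NA z ≤ D01.join (NA y₀) (NA b) := by rw [← Sjoin]; exact hSz
              exact (lbN _ hsub z hφz).trans (h2.trans (D01.join_le h1' le_rfl))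
          rw [hMε0, hNε0, hT.comm, hT.unit, hS.comm, hS.unit]
          constructor
          · refine (hMε v hv).2 ?_
            rintro _ ⟨b, hb, rfl⟩
            exact (key0 b hb).1
          · refine (hNε v hv).2 ?_
            rintro _ ⟨b, hb, rfl⟩
            exact (key0 b hb).2
        · have key : ∀ a b : M, φ a = u → φ b = v →
              D01.meet (MA a) (MA b) ≤ Mε (u - v) ∧
              Nε (u - v) ≤ D01.join (NA a) (NA b) := by
            intro a b ha hb
            obtain ⟨y, hy, hTy, hSy⟩ := hA.2.1 a b
            have hφy : φ y = u - v := by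
              have h1 := hφadd b y a hy
              rw [ha, hb] at h1
              exact eq_sub_of_add_eq' h1.symm
            constructor
            · have h2 : D01.meet (MA a) (MA b) ≤ MA y := by rw [← Tmeet]; exact hTy
              exact h2.trans (ubM _ hsub y hφy)
            · have h2 : NA y ≤ D01.join (NA a) (NA b) := by rw [← Sjoin]; exact hSy
              exact (lbN _ hsub y hφy).trans h2
          constructor
          · rw [Tmeet]
            refine meet_lub_le (hMε u hu) (hMε v hv) (setE u) (setE v) ?_
            rintro _ ⟨a, ha, rfl⟩ _ ⟨b, hb, rfl⟩
            exact (key a b ha hb).1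
          · rw [Sjoin]
            refine le_join_glb (hNε u hu) (hNε v hv) (setEN u) (setEN v) ?_
            rintro _ ⟨a, ha, rfl⟩ _ ⟨b, hb, rfl⟩
            exact (key a b ha hb).2
  · intro u r
    by_cases hu : u = 0
    · subst hu
      rw [smul_zero]
      exact ⟨le_rfl, le_rfl⟩
    · by_cases hru : ψ r • u = 0
      · rw [hru, hMε0, hNε0]
        exact ⟨D01.le_one'_s16 _, D01.zero_le' _⟩
      · constructor
        · refine (hMε u hu).2 ?_
          rintro _ ⟨a, ha, rfl⟩
          obtain ⟨d, hd⟩ := H.smul_nonempty r a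
          have hφd : φ d = ψ r • u := by rw [hφsmul r a d hd, ha]
          exact (hA.2.2.2 r a d hd).1.trans (ubM _ hru d hφd)
        · refine (hNε u hu).2 ?_
          rintro _ ⟨a, ha, rfl⟩
          obtain ⟨d, hd⟩ := H.smul_nonempty r a
          have hφd : φ d = ψ r • u := by rw [hφsmul r a d hd, ha]
          exact (lbN _ hru d hφd).trans (hA.2.2.2 r a d hd).2
end

section
/- Let M be an Hv-module and A = (M̃_A, Ñ_A) an interval valued intuitionistic (S,T)-fuzzy Hv-submodule. Then for any a ∈ M with M̃_A(a) = sup_{x∈M} M̃_A(x) attained, and any x ∈ M, every element α ∈ x + a satisfies M̃_A(α) ≥ T(M̃_A(x), M̃_A(a)); in particular the set M_* = { x ∈ M : M̃_A(x) = sup M̃_A and Ñ_A(x) = inf Ñ_A }, if nonempty, is an Hv-submodule of M. -/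
/-- Let `A = (M̃_A, Ñ_A)` be an interval valued intuitionistic `(S,T)`-fuzzy
`Hv`-submodule of `M`.  If `M̃_A` attains its supremum at `a` (and `Ñ_A` its infimum
at `b`), then every `α ∈ x + a` satisfies `M̃_A(α) ≥ T(M̃_A(x), M̃_A(a))`; and the
top-level set `M_* = { x : M̃_A(x) = sup M̃_A ∧ Ñ_A(x) = inf Ñ_A }`, being the
intersection of the two `Hv`-submodules `U(M̃_A; sup M̃_A)` and `L(Ñ_A; inf Ñ_A)`
(assumed `Hv`-submodules by Theorem 3.2), is, when nonempty, an `Hv`-submodule of `M`. -/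
theorem top_level_isHvSubmodule {R M : Type*} (H : HvModule R M)
    (T S : D01 → D01 → D01) (hT : IsIntervalTNorm T) (hS : IsIntervalSNorm S)
    (MA NA : M → D01) (hIF : IsIVIFSet MA NA)
    (hA : IsIVIFHvSubmodule H T S MA NA)
    (a b : M) (ha : ∀ x : M, MA x ≤ MA a) (hb : ∀ x : M, NA b ≤ NA x)
    (hUsub : IsHvSubmodule H (levelU MA (MA a)))
    (hLsub : IsHvSubmodule H (levelL NA (NA b)))
    (hstar : ({x : M | MA x = MA a ∧ NA x = NA b} : Set M).Nonempty) :
    (∀ x : M, ∀ α ∈ H.add x a, T (MA x) (MA a) ≤ MA α) ∧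
    IsHvSubmodule H {x : M | MA x = MA a ∧ NA x = NA b} := by
  obtain ⟨h1, h2, h3, h4⟩ := hA
  have hclosed : ∀ x ∈ {x : M | MA x = MA a ∧ NA x = NA b},
      ∀ y ∈ {x : M | MA x = MA a ∧ NA x = NA b}, H.add x y ⊆
      {x : M | MA x = MA a ∧ NA x = NA b} := by
    intro x hx y hy α hα
    obtain ⟨hα1, hα2⟩ := h1 x y α hα
    constructor
    · refine le_antisymm (ha α) ?_
      calc MA a = T (MA a) (MA a) := (hT.idem _).symm
        _ = T (MA x) (MA y) := by rw [hx.1, hy.1]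
        _ ≤ MA α := hα1
    · refine le_antisymm ?_ (hb α)
      calc NA α ≤ S (NA x) (NA y) := hα2
        _ = S (NA b) (NA b) := by rw [hx.2, hy.2]
        _ = NA b := hS.idem _
  refine ⟨fun x α hα => (h1 x a α hα).1, hstar, hclosed, ?_, ?_⟩
  · intro c hc
    constructor
    · ext x
      simp only [setAdd, Set.mem_iUnion, Set.mem_singleton_iff, exists_prop,
        exists_eq_left]
      constructor
      · rintro ⟨y, hy, hxy⟩
        exact hclosed c hc y hy hxy
      · intro hx
        obtain ⟨y, hy, hy1, hy2⟩ := h2 x c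
        refine ⟨y, ⟨?_, ?_⟩, hy⟩
        · refine le_antisymm (ha y) ?_
          calc MA a = T (MA a) (MA a) := (hT.idem _).symm
            _ = T (MA x) (MA c) := by rw [hx.1, hc.1]
            _ ≤ MA y := hy1
        · refine le_antisymm ?_ (hb y)
          calc NA y ≤ S (NA x) (NA c) := hy2
            _ = S (NA b) (NA b) := by rw [hx.2, hc.2]
            _ = NA b := hS.idem _
    · ext x
      simp only [setAdd, Set.mem_iUnion, Set.mem_singleton_iff, exists_prop,
        exists_eq_left]
      constructor
      · rintro ⟨y, hy, hxy⟩
        exact hclosed y hy c hc hxy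
      · intro hx
        obtain ⟨z, hz, hz1, hz2⟩ := h3 x c
        refine ⟨z, ⟨?_, ?_⟩, hz⟩
        · refine le_antisymm (ha z) ?_
          calc MA a = T (MA a) (MA a) := (hT.idem _).symm
            _ = T (MA x) (MA c) := by rw [hx.1, hc.1]
            _ ≤ MA z := hz1
        · refine le_antisymm ?_ (hb z)
          calc NA z ≤ S (NA x) (NA c) := hz2
            _ = S (NA b) (NA b) := by rw [hx.2, hc.2]
            _ = NA b := hS.idem _
  · intro r x hx α hα
    obtain ⟨hα1, hα2⟩ := h4 r x α hα
    exact ⟨le_antisymm (ha α) (hx.1 ▸ hα1), le_antisymm (hα2.trans hx.2.le) (hb α)⟩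
end
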